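/- arXiv:2109.11184 — 5 statements merged into one kernel-verified Lean document; each statement's English description precedes it below -/
import Mathlib

section
/- For an algebraic number α with minimal polynomial f(x) = a_n x^n + ... + a_0 over ℤ factoring as a_n(x-α_1)...(x-α_n) over ℂ, the Mahler measure M(α) = |a_n| ∏ max(1,|α_i|) satisfies M(α) ≥ 1, and M(α) = 1 if and only if α = 0 or α is a root of unity. -/
open Polynomial

noncomputable def intMinpoly (α : ℂ) : Polynomial ℤ :=
  (IsLocalization.integerNormalization (nonZeroDivisors ℤ) (minpoly ℚ α)).primPart

noncomputable def mahlerM (α : ℂ) : ℝ :=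
  ((intMinpoly α).leadingCoeff.natAbs : ℝ) *
    (((intMinpoly α).map (Int.castRingHom ℂ)).roots.map (fun z => max 1 ‖z‖)).prod

noncomputable def mahlerC (α : ℂ) : ℂ := (mahlerM α : ℝ)

def TorsionFree (α : ℂ) : Prop :=
  ∀ σ : ℂ ≃ₐ[ℚ] ℂ, σ α ≠ α → ∀ n : ℕ, 0 < n → (α / σ α) ^ n ≠ 1

/-! The Mahler measure of `α` is that of its primitive integer minimal polynomial `f`, so it is at
least `1`. If it equals `1` and `α ≠ 0`, Kronecker's theorem makes `α` a root of unity. Conversely,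
if `α = 0` or `α ^ n = 1`, Gauss's lemma makes `f` divide `X` or `X ^ n - 1` in `ℤ[X]`; these have
Mahler measure `1`, and the Mahler measure is multiplicative and at least `1` on nonzero integer
polynomials, so `M(f) ≤ 1`. -/

namespace Polynomial

theorem mahlerMeasure_map_le_of_dvd {p q : ℤ[X]} (hpq : p ∣ q) (hq : q ≠ 0) :
    (p.map (Int.castRingHom ℂ)).mahlerMeasure ≤ (q.map (Int.castRingHom ℂ)).mahlerMeasure := by
  obtain ⟨r, rfl⟩ := hpq
  rw [Polynomial.map_mul, mahlerMeasure_mul]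
  exact le_mul_of_one_le_right (mahlerMeasure_nonneg _)
    (one_le_mahlerMeasure_of_ne_zero (right_ne_zero_of_mul hq))

theorem mahlerMeasure_X_pow_sub_one {n : ℕ} (hn : 0 < n) :
    (X ^ n - 1 : ℂ[X]).mahlerMeasure = 1 := by
  rw [mahlerMeasure_eq_leadingCoeff_mul_prod_roots, ← C_1,
    (monic_X_pow_sub_C 1 hn.ne').leadingCoeff, norm_one, one_mul]
  refine Multiset.prod_eq_one fun x hx => ?_
  obtain ⟨z, hz, rfl⟩ := Multiset.mem_map.mp hx
  rw [← nthRoots, mem_nthRoots hn] at hz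
  simp [Complex.norm_eq_one_of_pow_eq_one hz hn.ne']

end Polynomial

theorem intMinpoly_ne_zero (α : ℂ) : intMinpoly α ≠ 0 := primPart_ne_zero _

theorem aeval_intMinpoly {α : ℂ} (hα : IsAlgebraic ℚ α) : aeval α (intMinpoly α) = 0 :=
  aeval_primPart_eq_zero
    (IsFractionRing.integerNormalization_eq_zero_iff.not.mpr (minpoly.ne_zero hα.isIntegral))
    (IsLocalization.integerNormalization_aeval_eq_zero _ _ (minpoly.aeval ℚ α))

theorem map_intMinpoly_dvd_minpoly (α : ℂ) :
    (intMinpoly α).map (algebraMap ℤ ℚ) ∣ minpoly ℚ α := by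
  obtain ⟨b, hb, hmap⟩ := IsLocalization.integerNormalization_spec (nonZeroDivisors ℤ) (minpoly ℚ α)
  rw [← Int.cast_smul_eq_zsmul ℚ, smul_eq_C_mul] at hmap
  refine (dvd_C_mul (Int.cast_ne_zero.mpr (nonZeroDivisors.ne_zero hb))).mp ?_
  exact hmap ▸ Polynomial.map_dvd _ (primPart_dvd _)

theorem intMinpoly_dvd {α : ℂ} {q : ℤ[X]} (hq : aeval α q = 0) : intMinpoly α ∣ q :=
  (isPrimitive_primPart _).dvd_of_fraction_map_dvd_fraction_map (K := ℚ)
    ((map_intMinpoly_dvd_minpoly α).trans (minpoly.dvd ℚ α (by rwa [aeval_map_algebraMap])))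

theorem mahlerM_eq_mahlerMeasure (α : ℂ) :
    mahlerM α = ((intMinpoly α).map (Int.castRingHom ℂ)).mahlerMeasure := by
  rw [mahlerMeasure_eq_leadingCoeff_mul_prod_roots, mahlerM,
    leadingCoeff_map_of_injective (Int.castRingHom ℂ).injective_int]
  simp

theorem mahler_ge_one_and_eq_one_iff (α : ℂ) (hα : IsAlgebraic ℚ α) :
    1 ≤ mahlerM α ∧
      (mahlerM α = 1 ↔ α = 0 ∨ ∃ n : ℕ, 0 < n ∧ α ^ n = 1) := by
  rw [mahlerM_eq_mahlerMeasure]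
  refine ⟨one_le_mahlerMeasure_of_ne_zero (intMinpoly_ne_zero α), fun hM => ?_, fun hα' => ?_⟩
  · have hroot : α ∈ (intMinpoly α).aroots ℂ :=
      mem_aroots.mpr ⟨intMinpoly_ne_zero α, aeval_intMinpoly hα⟩
    exact or_iff_not_imp_left.mpr fun hα₀ => pow_eq_one_of_mahlerMeasure_eq_one hM hα₀ hroot
  · obtain ⟨q, hq₀, hqα, hq⟩ : ∃ q : ℤ[X], q ≠ 0 ∧ aeval α q = 0 ∧
        (q.map (Int.castRingHom ℂ)).mahlerMeasure = 1 := by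
      rcases hα' with rfl | ⟨n, hn, hαn⟩
      · exact ⟨X, X_ne_zero, aeval_X _, by simpa using mahlerMeasure_X_sub_C 0⟩
      · exact ⟨X ^ n - 1, (monic_X_pow_sub_C 1 hn.ne').ne_zero, by simp [hαn],
          by simpa using mahlerMeasure_X_pow_sub_one hn⟩
    exact le_antisymm (hq ▸ mahlerMeasure_map_le_of_dvd (intMinpoly_dvd hqα) hq₀)
      (one_le_mahlerMeasure_of_ne_zero (intMinpoly_ne_zero α))
end

section
/- An algebraic number α is torsion-free if and only if [ℚ(α^n):ℚ] = [ℚ(α):ℚ] for every positive integer n. -/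
/-!
For `α ≠ 0`, `(α / σ α) ^ n = 1` says exactly that `σ` fixes `α ^ n`, so torsion-freeness means
that every automorphism of `ℂ` fixing some `α ^ n` fixes `α`. As `ℚ(α ^ n) ⊆ ℚ(α)`, equality of
degrees means `α ∈ ℚ(α ^ n)`. These agree by a Galois correspondence for `ℂ` over the countable
field `F = ℚ(α ^ n)`: if `α ∉ F`, it has a conjugate `β ≠ α` over `F`, and the `F`-embedding
`F(α) → ℂ` sending `α` to `β` extends to an automorphism of `ℂ`, since `ℂ` has transcendence
bases of the same cardinality `𝔠` over `F(α)` and over `F(β)`.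
-/

open Polynomial

open Cardinal IntermediateField

theorem IntermediateField.countable_adjoin (F : Type*) {E : Type*} [Field F] [Field E]
    [Algebra F E] [Countable F] {s : Set E} (hs : s.Countable) : Countable (adjoin F s) := by
  rw [← mk_le_aleph0_iff, ← lift_le_aleph0]
  refine (lift_cardinalMk_adjoin_le F s).trans (max_le (max_le ?_ ?_) le_rfl)
  · exact lift_le_aleph0.mpr (mk_le_aleph0_iff.mpr ‹_›)
  · exact lift_le_aleph0.mpr (le_aleph0_iff_set_countable.mpr hs)

theorem IsAlgClosed.exists_algEquiv_extend_of_countable {F Ω : Type*} [Field F] [Field Ω]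
    [Algebra F Ω] [IsAlgClosed Ω] [Uncountable Ω] {K : IntermediateField F Ω} [Countable K]
    (φ : K →ₐ[F] Ω) : ∃ σ : Ω ≃ₐ[F] Ω, ∀ x : K, σ x = φ x := by
  let K' := φ.fieldRange
  let e : K ≃ₐ[F] K' := AlgEquiv.ofInjectiveField φ
  have : Countable K' := e.toEquiv.countable_iff.mp ‹_›
  obtain ⟨s, hs⟩ := exists_isTranscendenceBasis K Ω
  obtain ⟨t, ht⟩ := exists_isTranscendenceBasis K' Ω
  -- over a countable field, a transcendence basis of `Ω` is as large as `Ω` itself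
  obtain ⟨b⟩ : Nonempty (s ≃ t) := Cardinal.eq.mp <|
    (cardinal_eq_cardinal_transcendence_basis_of_aleph0_lt' _ hs (mk_le_aleph0_iff.mpr ‹_›)
      (aleph0_lt_mk_iff.mpr ‹_›)).symm.trans
    (cardinal_eq_cardinal_transcendence_basis_of_aleph0_lt' _ ht (mk_le_aleph0_iff.mpr ‹_›)
      (aleph0_lt_mk_iff.mpr ‹_›))
  let := isAlgClosure_of_transcendence_basis _ hs
  let := isAlgClosure_of_transcendence_basis _ ht
  -- `τ : K[s] ≃ K'[t]` extends `e`, and `Ω` is an algebraic closure of both sides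
  let τ := hs.1.aevalEquiv.symm.toRingEquiv.trans <|
    (MvPolynomial.renameEquiv K b).toRingEquiv.trans <|
      (MvPolynomial.mapEquiv t e.toRingEquiv).trans ht.1.aevalEquiv.toRingEquiv
  have hτ (x : K) : τ (algebraMap K _ x) = algebraMap K' _ (e x) := by
    simpa [τ, MvPolynomial.mapEquiv_apply] using ht.1.aevalEquiv.commutes (e x)
  let σ := IsAlgClosure.equivOfEquiv Ω Ω τ
  have hσ (x : K) : σ x = φ x :=
    (IsAlgClosure.equivOfEquiv_algebraMap Ω Ω τ (algebraMap K _ x)).trans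
      (congrArg _ (hτ x))
  refine ⟨AlgEquiv.ofRingEquiv (f := σ) fun r => ?_, hσ⟩
  simpa using hσ (algebraMap F K r)

theorem IsConjRoot.exists_algEquiv_of_countable {K Ω : Type*} [Field K] [Field Ω] [Algebra K Ω]
    [IsAlgClosed Ω] [Countable K] [Uncountable Ω] {x y : Ω} (hx : IsIntegral K x)
    (h : IsConjRoot K x y) : ∃ σ : Ω ≃ₐ[K] Ω, σ x = y := by
  have := countable_adjoin K (Set.countable_singleton x)
  obtain ⟨σ, hσ⟩ := IsAlgClosed.exists_algEquiv_extend_of_countable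
    ((algHomAdjoinIntegralEquiv K hx).symm ⟨y, (isConjRoot_iff_mem_minpoly_aroots hx).mp h⟩)
  exact ⟨σ, (hσ (AdjoinSimple.gen K x)).trans (algHomAdjoinIntegralEquiv_symm_apply_gen K hx _)⟩

theorem IntermediateField.mem_adjoin_simple_iff_forall_algEquiv {K Ω : Type*} [Field K] [Field Ω]
    [Algebra K Ω] [IsAlgClosed Ω] [Countable K] [Uncountable Ω] {x : Ω} (hx : IsSeparable K x)
    (y : Ω) : x ∈ K⟮y⟯ ↔ ∀ σ : Ω ≃ₐ[K] Ω, σ y = y → σ x = x := by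
  constructor
  · intro hxy σ hσ
    have : (σ : Ω →ₐ[K] Ω).comp K⟮y⟯.val = K⟮y⟯.val := adjoin_algHom_ext K (by simpa using hσ)
    exact congr($this ⟨x, hxy⟩)
  · intro hfix
    by_contra hxy
    let F := K⟮y⟯
    have := countable_adjoin K (Set.countable_singleton y)
    have hxF : IsSeparable F x := hx.tower_top F
    obtain ⟨z, hne, hz⟩ := (notMem_iff_exists_ne_and_isConjRoot hxF (IsAlgClosed.splits _)).mp
      (by simpa [F, Algebra.mem_bot] using hxy)
    obtain ⟨σ, rfl⟩ := hz.exists_algEquiv_of_countable hxF.isIntegral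
    exact hne (hfix (σ.restrictScalars K) (σ.commutes (AdjoinSimple.gen K y))).symm

theorem IntermediateField.finrank_adjoin_simple_eq_iff_mem {K L : Type*} [Field K] [Field L]
    [Algebra K L] {x y : L} (hx : IsIntegral K x) (hy : y ∈ K⟮x⟯) :
    Module.finrank K K⟮y⟯ = Module.finrank K K⟮x⟯ ↔ x ∈ K⟮y⟯ := by
  have hle : K⟮y⟯ ≤ K⟮x⟯ := adjoin_simple_le_iff.mpr hy
  have := adjoin.finiteDimensional hx
  constructor
  · intro h
    rw [eq_of_le_of_finrank_eq hle h]
    exact mem_adjoin_simple_self K x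
  · intro h
    rw [le_antisymm hle (adjoin_simple_le_iff.mpr h)]

theorem torsionFree_iff_forall_pow_fixed (α : ℂ) :
    TorsionFree α ↔ ∀ n : ℕ, 0 < n → ∀ σ : ℂ ≃ₐ[ℚ] ℂ, σ (α ^ n) = α ^ n → σ α = α := by
  rcases eq_or_ne α 0 with rfl | hα
  · simp [TorsionFree]
  have hroot (σ : ℂ ≃ₐ[ℚ] ℂ) (n : ℕ) : (α / σ α) ^ n = 1 ↔ σ (α ^ n) = α ^ n := by
    rw [div_pow, div_eq_one_iff_eq (pow_ne_zero n (by simpa using hα)), map_pow, eq_comm]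
  simp only [TorsionFree, ne_eq, hroot]
  exact ⟨fun h n hn σ hσ => not_not.mp fun hne => h σ hne n hn hσ,
    fun h σ hne n hn hσ => hne (h n hn σ hσ)⟩

theorem torsionFree_iff_degree_pow_eq (α : ℂ) (hα : IsAlgebraic ℚ α) :
    TorsionFree α ↔
      ∀ n : ℕ, 0 < n →
        Module.finrank ℚ (IntermediateField.adjoin ℚ {α ^ n} : IntermediateField ℚ ℂ) =
          Module.finrank ℚ (IntermediateField.adjoin ℚ {α} : IntermediateField ℚ ℂ) := by
  have : Uncountable ℂ := aleph0_lt_mk_iff.mp (mk_complex ▸ aleph0_lt_continuum)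
  have hsep : IsSeparable ℚ α := (minpoly.irreducible hα.isIntegral).separable
  rw [torsionFree_iff_forall_pow_fixed]
  refine forall₂_congr fun n _ => ?_
  rw [finrank_adjoin_simple_eq_iff_mem hα.isIntegral (pow_mem (mem_adjoin_simple_self ℚ α) n),
    mem_adjoin_simple_iff_forall_algEquiv hsep]
end

section
/- Let K be a totally real quartic number field with non-trivial real embeddings σ₁, σ₂, σ₃. Then there exists an algebraic unit α ∈ K such that |α| > |σ₁(α)| > 1, |σ₂(α)| < 1, |σ₃(α)| < 1, and |α·σ_i(α)| ≠ 1 for all i ∈ {1,2,3}. -/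
/-!
Dirichlet's unit theorem gives units `u`, `v` whose logarithmic vectors `(log w(u))_w`,
`(log w(v))_w` are negative away from the place of the inclusion, resp. of `σ₁`; both have
coordinate sum `0`. The conditions on `α` say that its logarithmic vector lies in an open cone, and
the line `t ↦ t • log u + log v` enters that cone just before its `σ₁`-coordinate changes sign.
Openness yields a rational `t = p / q` there, and `α = u ^ p * v ^ q` works.
-/

open Topology NumberField

/-- The coordinates stand for `log |α|, log |σ₁ α|, log |σ₂ α|, log |σ₃ α|`. -/
def targetCone : Set (Fin 4 → ℝ) :=
  {x | x 1 < x 0 ∧ 0 < x 1 ∧ x 2 < 0 ∧ x 3 < 0 ∧ 0 < x 0 + x 2 ∧ 0 < x 0 + x 3}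

theorem isOpen_targetCone : IsOpen targetCone := by
  simp only [targetCone, Set.ofPred_and]
  apply_rules [IsOpen.inter, isOpen_lt, continuous_apply, continuous_const, Continuous.add]

theorem smul_mem_targetCone {c : ℝ} (hc : 0 < c) {x : Fin 4 → ℝ} (hx : x ∈ targetCone) :
    c • x ∈ targetCone := by
  obtain ⟨h01, h1, h2, h3, h02, h03⟩ := hx
  simp only [targetCone, Set.mem_ofPred_eq, Pi.smul_apply, smul_eq_mul, ← mul_add]
  exact ⟨by gcongr, by positivity, mul_neg_of_pos_of_neg hc h2, mul_neg_of_pos_of_neg hc h3,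
    by positivity, by positivity⟩

/-- Every condition of `targetCone` except `0 < x 1` holds strictly at `y`, hence near `y`. -/
theorem exists_pos_add_smul_mem_targetCone {y z : Fin 4 → ℝ} (hy : ∑ i, y i = 0)
    (hy₁ : y 1 = 0) (hy₂ : y 2 < 0) (hy₃ : y 3 < 0) (hz : 0 < z 1) :
    ∃ ε : ℝ, 0 < ε ∧ y + ε • z ∈ targetCone := by
  rw [Fin.sum_univ_four] at hy
  set D := {x : Fin 4 → ℝ | x 1 < x 0 ∧ x 2 < 0 ∧ x 3 < 0 ∧ 0 < x 0 + x 2 ∧ 0 < x 0 + x 3}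
  have hD : IsOpen D := by
    simp only [D, Set.ofPred_and]
    apply_rules [IsOpen.inter, isOpen_lt, continuous_apply, continuous_const, Continuous.add]
  have hyD : y ∈ D := ⟨by linarith, hy₂, hy₃, by linarith, by linarith⟩
  have hnear : ∀ᶠ ε in 𝓝 (0 : ℝ), y + ε • z ∈ D :=
    (Continuous.tendsto (by fun_prop) 0).eventually (hD.mem_nhds (by simpa using hyD))
  have hnear' : ∀ᶠ ε in 𝓝[>] (0 : ℝ), y + ε • z ∈ D := nhdsWithin_le_nhds hnear
  obtain ⟨ε, ⟨h01, h2, h3, h02, h03⟩, hε⟩ := (hnear'.and self_mem_nhdsWithin).exists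
  refine ⟨ε, hε, h01, ?_, h2, h3, h02, h03⟩
  simpa [hy₁] using mul_pos hε hz

theorem exists_smul_add_mem_targetCone {a b : Fin 4 → ℝ} (ha : ∑ i, a i = 0)
    (hb : ∑ i, b i = 0) (ha' : ∀ i ≠ 0, a i < 0) (hb' : ∀ i ≠ 1, b i < 0) :
    ∃ t : ℝ, t • a + b ∈ targetCone := by
  have ha₁ := ha' 1 (by decide)
  have hb₁ : 0 < b 1 := by
    rw [Fin.sum_univ_four] at hb
    linarith [hb' 0 (by decide), hb' 2 (by decide), hb' 3 (by decide)]
  set A := -(b 1 / a 1)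
  have hA : 0 < A := neg_pos.mpr (div_neg_of_pos_of_neg hb₁ ha₁)
  obtain ⟨ε, -, hε⟩ := exists_pos_add_smul_mem_targetCone (y := A • a + b) (z := -a)
    (by simp [Finset.sum_add_distrib, ← Finset.mul_sum, ha, hb])
    (show A * a 1 + b 1 = 0 by rw [neg_mul, div_mul_cancel₀ _ ha₁.ne, neg_add_cancel])
    (add_neg (mul_neg_of_pos_of_neg hA (ha' 2 (by decide))) (hb' 2 (by decide)))
    (add_neg (mul_neg_of_pos_of_neg hA (ha' 3 (by decide))) (hb' 3 (by decide)))
    (neg_pos.mpr ha₁)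
  refine ⟨A - ε, ?_⟩
  convert hε using 1
  ext i
  simp only [Pi.add_apply, Pi.smul_apply, smul_eq_mul, Pi.neg_apply]
  ring

theorem exists_int_smul_add_int_smul_mem_targetCone {a b : Fin 4 → ℝ} (ha : ∑ i, a i = 0)
    (hb : ∑ i, b i = 0) (ha' : ∀ i ≠ 0, a i < 0) (hb' : ∀ i ≠ 1, b i < 0) :
    ∃ m n : ℤ, m • a + n • b ∈ targetCone := by
  obtain ⟨t, ht⟩ := exists_smul_add_mem_targetCone ha hb ha' hb'
  obtain ⟨q, hq⟩ := Rat.denseRange_cast.exists_mem_open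
    (isOpen_targetCone.preimage (by fun_prop : Continuous fun t : ℝ => t • a + b)) ⟨t, ht⟩
  refine ⟨q.num, q.den, ?_⟩
  convert smul_mem_targetCone (Nat.cast_pos.mpr q.den_pos) hq using 1
  ext i
  simp only [Pi.add_apply, Pi.smul_apply, smul_eq_mul, zsmul_eq_mul, Pi.mul_apply,
    Pi.intCast_apply, Pi.natCast_apply, Int.cast_natCast, Rat.cast_def]
  field_simp

theorem lt_of_log_mem_targetCone {r : Fin 4 → ℝ} (hr : ∀ i, 0 < r i)
    (h : (fun i => Real.log (r i)) ∈ targetCone) :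
    r 1 < r 0 ∧ 1 < r 1 ∧ r 2 < 1 ∧ r 3 < 1 ∧ 1 < r 0 * r 1 ∧ 1 < r 0 * r 2 ∧ 1 < r 0 * r 3 := by
  obtain ⟨h01, h1, h2, h3, h02, h03⟩ := h
  simp only [← Real.log_mul (hr _).ne' (hr _).ne'] at h02 h03
  have hr01 := (Real.log_lt_log_iff (hr 1) (hr 0)).mp h01
  have hr1 := (Real.log_pos_iff (hr 1).le).mp h1
  exact ⟨hr01, hr1, (Real.log_neg_iff (hr 2)).mp h2, (Real.log_neg_iff (hr 3)).mp h3,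
    one_lt_mul_of_lt_of_le (hr1.trans hr01) hr1.le,
    (Real.log_pos_iff (mul_pos (hr 0) (hr 2)).le).mp h02,
    (Real.log_pos_iff (mul_pos (hr 0) (hr 3)).le).mp h03⟩

namespace NumberField

variable {K : Type*} [Field K]

theorem ComplexEmbedding.isReal_ofRealHom_comp (σ : K →+* ℝ) :
    ComplexEmbedding.IsReal (Complex.ofRealHom.comp σ) :=
  ComplexEmbedding.isReal_iff.mpr (by ext; simp [ComplexEmbedding.conjugate])

namespace InfinitePlace

noncomputable def ofReal (σ : K →+* ℝ) : InfinitePlace K :=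
  mk (Complex.ofRealHom.comp σ)

theorem ofReal_apply (σ : K →+* ℝ) (x : K) : ofReal σ x = |σ x| := by
  simp [ofReal, apply, Complex.norm_real]

theorem isReal_ofReal (σ : K →+* ℝ) : IsReal (ofReal σ) :=
  ⟨_, ComplexEmbedding.isReal_ofRealHom_comp σ, rfl⟩

theorem ofReal_injective : Function.Injective (ofReal : (K →+* ℝ) → InfinitePlace K) := by
  intro σ τ h
  have hφ : Complex.ofRealHom.comp σ = Complex.ofRealHom.comp τ := by
    rcases mk_eq_iff.mp h with h | h
    · exact h
    · rwa [ComplexEmbedding.isReal_iff.mp (ComplexEmbedding.isReal_ofRealHom_comp σ)] at h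
  ext x
  simpa using RingHom.congr_fun hφ x

end InfinitePlace

namespace Units

open InfinitePlace

theorem sum_log_ofReal_eq_zero [NumberField K] {ι : Type*} [Fintype ι] {σ : ι → K →+* ℝ}
    (hσ : Function.Injective σ) (hsurj : ∀ φ : K →+* ℂ, ∃ i, φ = Complex.ofRealHom.comp (σ i))
    (u : (𝓞 K)ˣ) : ∑ i, Real.log (ofReal (σ i) u) = 0 := by
  have hbij : Function.Bijective fun i => ofReal (σ i) := by
    refine ⟨ofReal_injective.comp hσ, fun w => ?_⟩
    obtain ⟨i, hi⟩ := hsurj w.embedding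
    exact ⟨i, show ofReal (σ i) = w by rw [ofReal, ← hi, mk_embedding]⟩
  rw [hbij.sum_comp fun w => Real.log (w u), ← sum_mult_mul_log u]
  refine Finset.sum_congr rfl fun w _ => ?_
  obtain ⟨i, rfl⟩ := hbij.2 w
  rw [(isReal_ofReal _).mult_eq_one, Nat.cast_one, one_mul]

theorem log_apply_zpow_mul_zpow (w : InfinitePlace K) (u v : (𝓞 K)ˣ) (m n : ℤ) :
    Real.log (w ((u ^ m * v ^ n : (𝓞 K)ˣ) : K)) = m * Real.log (w u) + n * Real.log (w v) := by
  have hu := (pos_at_place u w).ne'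
  have hv := (pos_at_place v w).ne'
  rw [coe_mul, coe_zpow, coe_zpow, map_mul, map_zpow₀, map_zpow₀,
    Real.log_mul (zpow_ne_zero _ hu) (zpow_ne_zero _ hv), Real.log_zpow, Real.log_zpow]

theorem isIntegral_coe_inv (u : (𝓞 K)ˣ) : IsIntegral ℤ (u : K)⁻¹ := by
  rw [← zpow_neg_one, ← coe_zpow]
  exact RingOfIntegers.isIntegral_coe _

end Units

end NumberField

open InfinitePlace Units in
theorem exists_unit_totally_real_quartic_general (K : Subfield ℝ) [FiniteDimensional ℚ K]
    (σ₁ σ₂ σ₃ : K →+* ℝ)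
    (hne1 : σ₁ ≠ K.subtype) (hne2 : σ₂ ≠ K.subtype) (hne3 : σ₃ ≠ K.subtype)
    (h12 : σ₁ ≠ σ₂) (h13 : σ₁ ≠ σ₃) (h23 : σ₂ ≠ σ₃)
    (hall : ∀ φ : K →+* ℂ,
      φ = Complex.ofRealHom.comp K.subtype ∨ φ = Complex.ofRealHom.comp σ₁ ∨
        φ = Complex.ofRealHom.comp σ₂ ∨ φ = Complex.ofRealHom.comp σ₃) :
    ∃ α : K, α ≠ 0 ∧ IsIntegral ℤ α ∧ IsIntegral ℤ α⁻¹ ∧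
      |(α : ℝ)| > |σ₁ α| ∧ |σ₁ α| > 1 ∧ |σ₂ α| < 1 ∧ |σ₃ α| < 1 ∧
      |(α : ℝ) * σ₁ α| ≠ 1 ∧ |(α : ℝ) * σ₂ α| ≠ 1 ∧ |(α : ℝ) * σ₃ α| ≠ 1 := by
  have : NumberField K := ⟨⟩
  set σ : Fin 4 → K →+* ℝ := ![K.subtype, σ₁, σ₂, σ₃]
  have hσ : Function.Injective σ := by
    intro i j h
    fin_cases i <;> fin_cases j <;> simp_all [σ, eq_comm]
  have hsurj (φ : K →+* ℂ) : ∃ i, φ = Complex.ofRealHom.comp (σ i) := by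
    rcases hall φ with h | h | h | h
    exacts [⟨0, h⟩, ⟨1, h⟩, ⟨2, h⟩, ⟨3, h⟩]
  have hw : Function.Injective fun i => ofReal (σ i) := ofReal_injective.comp hσ
  obtain ⟨u, hu⟩ := dirichletUnitTheorem.exists_unit K (ofReal (σ 0))
  obtain ⟨v, hv⟩ := dirichletUnitTheorem.exists_unit K (ofReal (σ 1))
  obtain ⟨m, n, hx⟩ := exists_int_smul_add_int_smul_mem_targetCone
    (sum_log_ofReal_eq_zero hσ hsurj u) (sum_log_ofReal_eq_zero hσ hsurj v)
    (fun i hi => hu _ (hw.ne hi)) (fun i hi => hv _ (hw.ne hi))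
  set α := u ^ m * v ^ n
  have hlog : (fun i => Real.log |σ i α|) = m • (fun i => Real.log (ofReal (σ i) u)) +
      n • fun i => Real.log (ofReal (σ i) v) := by
    ext i
    rw [Pi.add_apply, Pi.smul_apply, Pi.smul_apply, zsmul_eq_mul, zsmul_eq_mul, ← ofReal_apply]
    exact log_apply_zpow_mul_zpow _ u v m n
  obtain ⟨h01, h1, h2, h3, hp1, hp2, hp3⟩ :=
    lt_of_log_mem_targetCone (fun i => abs_pos.mpr ((map_ne_zero _).mpr (coe_ne_zero α)))
      (hlog ▸ hx)
  refine ⟨α, coe_ne_zero α, RingOfIntegers.isIntegral_coe _, isIntegral_coe_inv α, h01, h1, h2, h3,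
    ?_, ?_, ?_⟩ <;> rw [abs_mul]
  exacts [hp1.ne', hp2.ne', hp3.ne']

theorem exists_unit_totally_real_quartic (K : Subfield ℝ) [FiniteDimensional ℚ K]
    (h4 : Module.finrank ℚ K = 4)
    (σ₁ σ₂ σ₃ : K →+* ℝ)
    (hne1 : σ₁ ≠ K.subtype) (hne2 : σ₂ ≠ K.subtype) (hne3 : σ₃ ≠ K.subtype)
    (h12 : σ₁ ≠ σ₂) (h13 : σ₁ ≠ σ₃) (h23 : σ₂ ≠ σ₃)
    (hall : ∀ φ : K →+* ℂ,
      φ = Complex.ofRealHom.comp K.subtype ∨ φ = Complex.ofRealHom.comp σ₁ ∨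
        φ = Complex.ofRealHom.comp σ₂ ∨ φ = Complex.ofRealHom.comp σ₃) :
    ∃ α : K, α ≠ 0 ∧ IsIntegral ℤ α ∧ IsIntegral ℤ α⁻¹ ∧
      |(α : ℝ)| > |σ₁ α| ∧ |σ₁ α| > 1 ∧ |σ₂ α| < 1 ∧ |σ₃ α| < 1 ∧
      |(α : ℝ) * σ₁ α| ≠ 1 ∧ |(α : ℝ) * σ₂ α| ≠ 1 ∧ |(α : ℝ) * σ₃ α| ≠ 1 :=
  exists_unit_totally_real_quartic_general K σ₁ σ₂ σ₃ hne1 hne2 hne3 h12 h13 h23 hall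
end

section
/- Let α be an algebraic number of degree 4 with conjugates α₁,α₂,α₃,α₄ satisfying |α₁| = |α₂| > |α₃| = |α₄| (totally imaginary case). If α₁α₃ = α₂α₄, then α₁α₃ is not a Galois conjugate of α₁α₂. -/
/-!
Since α₁α₃ = α₂α₄, the square (α₁α₃)² is the product α₁α₂α₃α₄ of all conjugates, a rational
number q. A conjugate of α₁α₃ is again a root of X² - q, so if α₁α₂ were one, then
|α₁α₂|² = |q| = |α₁α₃|², which contradicts |α₂| > |α₃|.
-/

open Polynomial

theorem Polynomial.prod_roots_map_eq_algebraMap {K L : Type*} [Field K] [Field L] [Algebra K L]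
    {p : K[X]} (hp : p.Monic) (hs : (p.map (algebraMap K L)).Splits) :
    (p.map (algebraMap K L)).roots.prod = algebraMap K L ((-1) ^ p.natDegree * p.coeff 0) := by
  have h := hs.coeff_zero_eq_prod_roots_of_monic (hp.map _)
  rw [coeff_map, natDegree_map] at h
  rw [map_mul, h, map_pow, map_neg, map_one, ← mul_assoc, ← mul_pow]
  simp

theorem IsConjRoot.aeval_eq_zero_of_aeval_eq_zero {K A : Type*} [Field K] [Ring A] [Algebra K A]
    {x y : A} (h : IsConjRoot K x y) {g : K[X]} (hg : aeval y g = 0) : aeval x g = 0 := by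
  obtain ⟨c, rfl⟩ := (isConjRoot_def.1 h).symm ▸ minpoly.dvd K y hg
  rw [map_mul, minpoly.aeval, zero_mul]

theorem not_conjugate_of_cross_products_equal_general (α : ℂ) (hα : IsAlgebraic ℚ α)
    (α₁ α₂ α₃ α₄ : ℂ)
    (hroots : ((minpoly ℚ α).map (algebraMap ℚ ℂ)).roots = {α₁, α₂, α₃, α₄})
    (h12 : ‖α₁‖ = ‖α₂‖) (h23 : ‖α₂‖ > ‖α₃‖)
    (hcross : α₁ * α₃ = α₂ * α₄) :
    (Polynomial.aeval (α₁ * α₃)) (minpoly ℚ (α₁ * α₂)) ≠ 0 := by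
  intro hconj
  have hαint : IsIntegral ℚ α := hα.isIntegral
  have hroot_integral (β : ℂ) (hβ : β ∈ ({α₁, α₂, α₃, α₄} : Multiset ℂ)) : IsIntegral ℚ β :=
    ((isConjRoot_iff_mem_minpoly_aroots hαint).2 (by rwa [aroots, hroots])).isIntegral hαint
  set q := (-1) ^ (minpoly ℚ α).natDegree * (minpoly ℚ α).coeff 0
  have hprod : α₁ * α₂ * α₃ * α₄ = algebraMap ℚ ℂ q := by
    rw [← prod_roots_map_eq_algebraMap (minpoly.monic hαint) (IsAlgClosed.splits _), hroots]
    simp [mul_assoc]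
  have hsq13 : (α₁ * α₃) ^ 2 = algebraMap ℚ ℂ q := by
    rw [← hprod]; linear_combination (α₁ * α₃) * hcross
  have hsq12 : (α₁ * α₂) ^ 2 = algebraMap ℚ ℂ q := by
    have hconjRoot := isConjRoot_of_aeval_eq_zero
      ((hroot_integral α₁ (by simp)).mul (hroot_integral α₂ (by simp))) hconj
    have h := hconjRoot.aeval_eq_zero_of_aeval_eq_zero (g := X ^ 2 - C q) (by simp [hsq13])
    rwa [map_sub, map_pow, aeval_X, aeval_C, sub_eq_zero] at h
  have hlt : ‖α₁ * α₃‖ < ‖α₁ * α₂‖ := by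
    rw [norm_mul, norm_mul]
    exact mul_lt_mul_of_pos_left h23 (h12 ▸ (norm_nonneg α₃).trans_lt h23)
  have heq : ‖α₁ * α₂‖ = ‖α₁ * α₃‖ :=
    (pow_left_inj₀ (norm_nonneg _) (norm_nonneg _) two_ne_zero).1 <| by
      rw [← norm_pow, ← norm_pow, hsq12, hsq13]
  exact hlt.ne' heq

theorem not_conjugate_of_cross_products_equal (α : ℂ) (hα : IsAlgebraic ℚ α)
    (α₁ α₂ α₃ α₄ : ℂ)
    (hroots : ((minpoly ℚ α).map (algebraMap ℚ ℂ)).roots = {α₁, α₂, α₃, α₄})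
    (h12 : ‖α₁‖ = ‖α₂‖) (h23 : ‖α₂‖ > ‖α₃‖) (h34 : ‖α₃‖ = ‖α₄‖)
    (hcross : α₁ * α₃ = α₂ * α₄) :
    (Polynomial.aeval (α₁ * α₃)) (minpoly ℚ (α₁ * α₂)) ≠ 0 :=
  not_conjugate_of_cross_products_equal_general α hα α₁ α₂ α₃ α₄ hroots h12 h23 hcross
end

section
/- Let K/ℚ be a totally real Galois extension of degree 6 with Gal(K/ℚ) ≅ C₆, generated by σ. If α is an algebraic unit in K with |α| > |σ⁵(α)| > |σ(α)| > 1 > |σ⁴(α)| > |σ²(α)| > |σ³(α)|, then β = M(α) = |α σ⁵(α) σ(α)| is an algebraic unit whose conjugates satisfy the same distribution |β| > |σ⁵(β)| > |σ(β)| > 1 > |σ⁴(β)| > |σ²(β)| > |σ³(β)|; consequently α is a wandering point under iteration of M. -/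
open Polynomial

/-!
Write `aᵢ = |σⁱ α|` and `bᵢ = |σⁱ β|`. Since `σᵏ β = σᵏ⁻¹ α · σᵏ α · σᵏ⁺¹ α`, each `bₖ` is the
product of three cyclically adjacent `aᵢ`. As `α` is a unit, `∏ aᵢ = |N(α)| = 1`, and this together
with `a₀ > a₅ > a₁ > 1 > a₄ > a₂ > a₃` forces `b₀ > b₅ > b₁ > 1 > b₄ > b₂ > b₃`. The six
conjugates of `α` are distinct, so they are the roots of its minimal polynomial and
`M(α) = a₀ a₅ a₁ = b₀ > a₀`. Hence `M` maps such units to such units (up to sign) while strictly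
increasing the absolute value, and the orbit of `α` is infinite.
-/

lemma intMinpoly_associated_minpoly {c : ℂ} (hc : IsIntegral ℤ c) :
    Associated (intMinpoly c) (minpoly ℤ c) := by
  obtain ⟨b, hb, hmap⟩ :=
    IsLocalization.integerNormalization_spec (nonZeroDivisors ℤ) (minpoly ℚ c)
  have hnorm : IsLocalization.integerNormalization (nonZeroDivisors ℤ) (minpoly ℚ c) =
      C b * minpoly ℤ c := by
    apply Polynomial.map_injective _ (IsFractionRing.injective ℤ ℚ)
    rw [hmap, minpoly.isIntegrallyClosed_eq_field_fractions' ℚ hc, Polynomial.map_mul,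
      Polynomial.map_C, ← smul_eq_C_mul, algebraMap_smul]
  have hb0 : C b * minpoly ℤ c ≠ 0 :=
    mul_ne_zero (C_ne_zero.mpr (nonZeroDivisors.ne_zero hb)) (minpoly.ne_zero hc)
  rw [intMinpoly, hnorm, primPart_mul hb0, (minpoly.monic hc).isPrimitive.primPart_eq]
  exact associated_unit_mul_left _ _ (isUnit_primPart_C b)

lemma mahlerM_eq_of_isIntegral {c : ℂ} (hc : IsIntegral ℤ c) :
    mahlerM c = (((minpoly ℚ c).aroots ℂ).map fun z => max 1 ‖z‖).prod := by
  have hassoc := intMinpoly_associated_minpoly hc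
  have hlead : (intMinpoly c).leadingCoeff.natAbs = 1 := by
    have := Int.natAbs_eq_iff_associated.mpr (hassoc.map (leadingCoeffHom (R := ℤ)))
    simpa [(minpoly.monic hc).leadingCoeff] using this
  have hroots : ((intMinpoly c).map (Int.castRingHom ℂ)).roots = (minpoly ℚ c).aroots ℂ := by
    refine (hassoc.map (mapRingHom (Int.castRingHom ℂ))).roots_eq.trans ?_
    rw [coe_mapRingHom, aroots, minpoly.isIntegrallyClosed_eq_field_fractions' ℚ hc,
      Polynomial.map_map]
    rfl
  rw [mahlerM, hlead, hroots, Nat.cast_one, one_mul]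

lemma mahlerM_eq_prod_max_of_injective {K : IntermediateField ℚ ℝ} [FiniteDimensional ℚ K]
    {ι : Type*} [Fintype ι] (τ : ι → K ≃ₐ[ℚ] K) (hcard : Module.finrank ℚ K ≤ Fintype.card ι)
    {x : K} (hx : IsIntegral ℤ x) (hinj : Function.Injective fun i => ((τ i x : K) : ℝ)) :
    mahlerM ((x : ℝ) : ℂ) = ∏ i, max 1 |((τ i x : K) : ℝ)| := by
  have hxℂ : IsIntegral ℤ ((x : ℝ) : ℂ) :=
    (hx.map (IsScalarTower.toAlgHom ℤ K ℝ)).map (IsScalarTower.toAlgHom ℤ ℝ ℂ)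
  have hmin : minpoly ℚ ((x : ℝ) : ℂ) = minpoly ℚ x := by
    rw [← minpoly.algebraMap_eq (algebraMap K ℝ).injective x,
      ← minpoly.algebraMap_eq (algebraMap ℝ ℂ).injective]
    rfl
  set S : Multiset ℂ := Finset.univ.val.map fun i => (((τ i x : K) : ℝ) : ℂ)
  have hS : S.Nodup := Multiset.Nodup.map (Complex.ofReal_injective.comp hinj) Finset.univ.nodup
  have hsub : S ⊆ (minpoly ℚ x).aroots ℂ := by
    rintro _ hz
    obtain ⟨i, -, rfl⟩ := Multiset.mem_map.mp hz
    rw [mem_aroots, ← minpoly.algEquiv_eq (τ i) x]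
    refine ⟨minpoly.ne_zero (IsIntegral.of_finite ℚ _), ?_⟩
    rw [show (((τ i x : K) : ℝ) : ℂ) = algebraMap ℝ ℂ (algebraMap K ℝ (τ i x)) from rfl,
      aeval_algebraMap_apply, aeval_algebraMap_apply, minpoly.aeval, map_zero, map_zero]
  have hroots : (minpoly ℚ x).aroots ℂ = S := by
    refine (Multiset.eq_of_le_of_card_le ((Multiset.le_iff_subset hS).mpr hsub) ?_).symm
    calc Multiset.card ((minpoly ℚ x).aroots ℂ) = (minpoly ℚ x).natDegree :=
          IsAlgClosed.card_aroots_eq_natDegree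
      _ ≤ Module.finrank ℚ K := minpoly.natDegree_le x
      _ ≤ Multiset.card S := by simpa [S] using hcard
  rw [mahlerM_eq_of_isIntegral hxℂ, hmin, hroots, Multiset.map_map, Finset.prod_eq_multiset_prod]
  simp [Complex.norm_real]

lemma Rat.abs_eq_one_of_isIntegral_inv {q : ℚ} (hq : q ≠ 0) (h : IsIntegral ℤ q)
    (h' : IsIntegral ℤ q⁻¹) : |q| = 1 := by
  obtain ⟨m, hm⟩ := IsIntegrallyClosed.isIntegral_iff.mp h
  obtain ⟨n, hn⟩ := IsIntegrallyClosed.isIntegral_iff.mp h'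
  simp only [algebraMap_int_eq, eq_intCast] at hm hn
  have hmn : m * n = 1 := by
    exact_mod_cast (show (m : ℚ) * n = 1 by rw [hm, hn, mul_inv_cancel₀ hq])
  rw [← hm, ← Int.cast_abs, Int.isUnit_iff_abs_eq.mp (IsUnit.of_mul_eq_one _ hmn), Int.cast_one]

lemma abs_norm_eq_one_of_isIntegral_inv {L : Type*} [Field L] [Algebra ℚ L]
    [FiniteDimensional ℚ L] {x : L} (hx0 : x ≠ 0) (h : IsIntegral ℤ x) (h' : IsIntegral ℤ x⁻¹) :
    |Algebra.norm ℚ x| = 1 :=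
  Rat.abs_eq_one_of_isIntegral_inv (Algebra.norm_ne_zero_iff.mpr hx0)
    (Algebra.isIntegral_norm ℚ h) (Algebra.norm_inv (K := ℚ) x ▸ Algebra.isIntegral_norm ℚ h')

lemma prod_abs_aut_apply_eq_one {K : IntermediateField ℚ ℝ} [FiniteDimensional ℚ K]
    [IsGalois ℚ K] {x : K} (hx0 : x ≠ 0) (h : IsIntegral ℤ x) (h' : IsIntegral ℤ x⁻¹) :
    ∏ τ : K ≃ₐ[ℚ] K, |((τ x : K) : ℝ)| = 1 := by
  have hnorm := congrArg ((↑) : K → ℝ) (Algebra.norm_eq_prod_automorphisms ℚ x)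
  rw [eq_ratCast] at hnorm
  push_cast at hnorm
  rw [← Finset.abs_prod, ← hnorm]
  exact_mod_cast abs_norm_eq_one_of_isIntegral_inv hx0 h h'

lemma bijective_pow_val_of_orderOf_eq_card {G : Type*} [Group G] [Fintype G] {g : G} {n : ℕ}
    (hg : orderOf g = n) (hn : Fintype.card G = n) :
    Function.Bijective fun i : Fin n => g ^ (i : ℕ) := by
  rw [Fintype.bijective_iff_injective_and_card, Fintype.card_fin, hn]
  refine ⟨fun i j hij => Fin.ext (pow_injOn_Iio_orderOf ?_ ?_ hij), rfl⟩
  · exact hg ▸ i.isLt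
  · exact hg ▸ j.isLt

lemma AlgEquiv.pow_val_apply_pow_val {R A : Type*} [CommSemiring R] [Semiring A] [Algebra R A]
    {σ : A ≃ₐ[R] A} {n : ℕ} [NeZero n] (hσ : orderOf σ = n) (i j : Fin n) (x : A) :
    (σ ^ (i : ℕ)) ((σ ^ (j : ℕ)) x) = (σ ^ ((i + j : Fin n) : ℕ)) x := by
  subst hσ
  rw [← AlgEquiv.mul_apply, ← pow_add, Fin.val_add, pow_mod_orderOf]

lemma Function.infinite_range_iterate_of_mapsTo {X β : Type*} [Preorder β] {f : X → X}
    {s : Set X} (hs : Set.MapsTo f s s) (v : X → β) (hv : ∀ y ∈ s, v y < v (f y)) {x : X}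
    (hx : x ∈ s) : (Set.range fun m => f^[m] x).Infinite := by
  have hmono : StrictMono fun m => v (f^[m] x) := strictMono_nat_of_lt_succ fun m => by
    rw [Function.iterate_succ_apply']
    exact hv _ (hs.iterate m hx)
  exact Set.infinite_range_of_injective (Function.Injective.of_comp (f := v) hmono.injective)

def IsSexticChain (a : Fin 6 → ℝ) : Prop :=
  a 5 < a 0 ∧ a 1 < a 5 ∧ 1 < a 1 ∧ a 4 < 1 ∧ a 2 < a 4 ∧ a 3 < a 2

namespace IsSexticChain

variable {a : Fin 6 → ℝ}

lemma injective (ha : IsSexticChain a) : Function.Injective a := by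
  obtain ⟨h50, h15, h1, h4, h24, h32⟩ := ha
  intro i j hij
  fin_cases i <;> fin_cases j <;> first | rfl | (simp at hij; linarith)

lemma prod_max_one (ha : IsSexticChain a) : ∏ i, max 1 (a i) = a 0 * a 5 * a 1 := by
  obtain ⟨h50, h15, h1, h4, h24, h32⟩ := ha
  rw [Fin.prod_univ_six, max_eq_right (by linarith), max_eq_right h1.le, max_eq_left (by linarith),
    max_eq_left (by linarith), max_eq_left h4.le, max_eq_right (by linarith)]
  ring

lemma lt_mul_adjacent (ha : IsSexticChain a) : a 0 < a 0 * a 5 * a 1 := by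
  obtain ⟨h50, h15, h1, -⟩ := ha
  have p0 : 0 < a 0 := by linarith
  nlinarith [mul_lt_mul h15 h1.le zero_lt_one (by linarith : 0 ≤ a 5)]

lemma mul_adjacent (ha : IsSexticChain a) (hpos : ∀ i, 0 ≤ a i) (hprod : ∏ i, a i = 1) :
    IsSexticChain fun k => a k * a (k + 5) * a (k + 1) := by
  obtain ⟨h50, h15, h1, h4, h24, h32⟩ := ha
  rw [Fin.prod_univ_six] at hprod
  have p3 : 0 < a 3 := (hpos 3).lt_of_ne fun h => by simp [← h] at hprod
  have p2 : 0 < a 2 := p3.trans h32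
  have p4 : 0 < a 4 := p2.trans h24
  have p5 : 0 < a 5 := by linarith
  have p0 : 0 < a 0 := by linarith
  have h41 : a 4 < a 1 := h4.trans h1
  have h21_45 : a 2 * a 1 < a 4 * a 5 := mul_lt_mul'' h24 h15 p2.le (by linarith)
  -- `a₃a₄a₅ < a₀a₁a₂` and their product is `1`, so `1` lies strictly between them.
  have hsmall : a 3 * a 4 * a 5 < a 0 * a 1 * a 2 := by
    have := mul_lt_mul'' (mul_lt_mul'' h32 h41 p3.le p4.le) h50 (by positivity) p5.le
    linarith
  have hprod' : (a 0 * a 1 * a 2) * (a 3 * a 4 * a 5) = 1 := by linear_combination hprod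
  have hpos' : 0 < a 3 * a 4 * a 5 := by positivity
  refine ⟨?_, ?_, ?_, ?_, ?_, ?_⟩ <;> simp only [Fin.reduceAdd, Fin.isValue]
  · nlinarith [mul_lt_mul_of_pos_left h41 (mul_pos p0 p5)]
  · nlinarith [mul_lt_mul_of_pos_left h21_45 p0]
  · nlinarith
  · nlinarith
  · nlinarith [mul_lt_mul_of_pos_left h21_45 p3]
  · nlinarith [mul_lt_mul_of_pos_left h41 (mul_pos p2 p3)]

end IsSexticChain

section

variable {K : IntermediateField ℚ ℝ}

noncomputable def conjAbs {n : ℕ} (σ : K ≃ₐ[ℚ] K) (x : K) (i : Fin n) : ℝ :=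
  |((σ ^ (i : ℕ)) x : ℝ)|

lemma conjAbs_mul_conj {σ : K ≃ₐ[ℚ] K} (hσ : orderOf σ = 6) (x : K) :
    conjAbs σ (x * (σ ^ 5) x * σ x) =
      fun k : Fin 6 => conjAbs σ x k * conjAbs σ x (k + 5) * conjAbs σ x (k + 1) := by
  ext k
  have h1 : (σ ^ (k : ℕ)) (σ x) = (σ ^ ((k + 1 : Fin 6) : ℕ)) x :=
    AlgEquiv.pow_val_apply_pow_val hσ k 1 x
  have h5 : (σ ^ (k : ℕ)) ((σ ^ 5) x) = (σ ^ ((k + 5 : Fin 6) : ℕ)) x :=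
    AlgEquiv.pow_val_apply_pow_val hσ k 5 x
  simp only [conjAbs, map_mul, h1, h5, IntermediateField.coe_mul, abs_mul]

variable [FiniteDimensional ℚ K]

lemma prod_conjAbs_eq_one [IsGalois ℚ K] {σ : K ≃ₐ[ℚ] K} {n : ℕ} (hσ : orderOf σ = n)
    (hn : Module.finrank ℚ K = n) {x : K} (hx0 : x ≠ 0) (h : IsIntegral ℤ x)
    (h' : IsIntegral ℤ x⁻¹) : ∏ i : Fin n, conjAbs σ x i = 1 := by
  have hcard : Fintype.card (K ≃ₐ[ℚ] K) = n := by
    rw [← Nat.card_eq_fintype_card, IsGalois.card_aut_eq_finrank, hn]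
  rw [← prod_abs_aut_apply_eq_one hx0 h h']
  exact Fintype.prod_bijective _ (bijective_pow_val_of_orderOf_eq_card hσ hcard) _ _
    fun _ => rfl

lemma mahlerM_eq_prod_max_conjAbs {σ : K ≃ₐ[ℚ] K} {n : ℕ} (hn : Module.finrank ℚ K ≤ n)
    {x : K} (hx : IsIntegral ℤ x) (hinj : Function.Injective (conjAbs σ x : Fin n → ℝ)) :
    mahlerM ((x : ℝ) : ℂ) = ∏ i : Fin n, max 1 (conjAbs σ x i) :=
  mahlerM_eq_prod_max_of_injective (fun i : Fin n => σ ^ (i : ℕ)) (by simpa using hn) hx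
    (Function.Injective.of_comp (f := abs) hinj)

end

structure IsSexticChainUnit {K : IntermediateField ℚ ℝ} (σ : K ≃ₐ[ℚ] K) (x : K) : Prop where
  isIntegral : IsIntegral ℤ x
  isIntegral_inv : IsIntegral ℤ x⁻¹
  chain : IsSexticChain (conjAbs σ x)

namespace IsSexticChainUnit

variable {K : IntermediateField ℚ ℝ} {σ : K ≃ₐ[ℚ] K} {x : K}

lemma ne_zero (hx : IsSexticChainUnit σ x) : x ≠ 0 := by
  rintro rfl
  obtain ⟨-, -, h1, -⟩ := hx.chain
  norm_num [conjAbs] at h1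

lemma neg (hx : IsSexticChainUnit σ x) : IsSexticChainUnit σ (-x) where
  isIntegral := hx.isIntegral.neg
  isIntegral_inv := inv_neg (a := x) ▸ hx.isIntegral_inv.neg
  chain := by simpa [IsSexticChain, conjAbs] using hx.chain

lemma abs_lt_abs_mul_conj (hx : IsSexticChainUnit σ x) :
    |(x : ℝ)| < |((x * (σ ^ 5) x * σ x : K) : ℝ)| := by
  simpa [conjAbs, abs_mul] using hx.chain.lt_mul_adjacent

lemma mahlerM_eq [FiniteDimensional ℚ K] (h6 : Module.finrank ℚ K = 6)
    (hx : IsSexticChainUnit σ x) :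
    mahlerM ((x : ℝ) : ℂ) = |((x * (σ ^ 5) x * σ x : K) : ℝ)| := by
  rw [mahlerM_eq_prod_max_conjAbs h6.le hx.isIntegral hx.chain.injective, hx.chain.prod_max_one]
  simp [conjAbs, abs_mul]

lemma mul_conj [FiniteDimensional ℚ K] [IsGalois ℚ K] (h6 : Module.finrank ℚ K = 6)
    (hσ : orderOf σ = 6) (hx : IsSexticChainUnit σ x) :
    IsSexticChainUnit σ (x * (σ ^ 5) x * σ x) := by
  have hconj {y : K} (hy : IsIntegral ℤ y) (τ : K ≃ₐ[ℚ] K) : IsIntegral ℤ (τ y) :=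
    hy.map (τ.toAlgHom.restrictScalars ℤ)
  refine ⟨(hx.isIntegral.mul (hconj hx.isIntegral _)).mul (hconj hx.isIntegral _), ?_, ?_⟩
  · rw [mul_inv, mul_inv, ← map_inv₀, ← map_inv₀]
    exact (hx.isIntegral_inv.mul (hconj hx.isIntegral_inv _)).mul (hconj hx.isIntegral_inv _)
  · rw [conjAbs_mul_conj hσ]
    exact hx.chain.mul_adjacent (fun _ => abs_nonneg _)
      (prod_conjAbs_eq_one hσ h6 hx.ne_zero hx.isIntegral hx.isIntegral_inv)

lemma infinite_range_iterate_mahlerC [FiniteDimensional ℚ K] [IsGalois ℚ K]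
    (h6 : Module.finrank ℚ K = 6) (hσ : orderOf σ = 6) (hx : IsSexticChainUnit σ x) :
    (Set.range fun m : ℕ => mahlerC^[m] ((x : ℝ) : ℂ)).Infinite := by
  refine Function.infinite_range_iterate_of_mapsTo (s := (fun y : K => ((y : ℝ) : ℂ)) ''
    {y | IsSexticChainUnit σ y}) ?_ (‖·‖) ?_ ⟨x, hx, rfl⟩
  · rintro _ ⟨y, hy, rfl⟩
    have hβ := hy.mul_conj h6 hσ
    rcases abs_choice ((y * (σ ^ 5) y * σ y : K) : ℝ) with h | h
    · exact ⟨_, hβ, by rw [mahlerC, hy.mahlerM_eq h6, h]⟩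
    · exact ⟨_, hβ.neg, by rw [mahlerC, hy.mahlerM_eq h6, h]; rfl⟩
  · rintro _ ⟨y, hy, rfl⟩
    simpa [mahlerC, hy.mahlerM_eq h6] using hy.abs_lt_abs_mul_conj

end IsSexticChainUnit

theorem cyclic_sextic_totally_real_wandering_general (K : IntermediateField ℚ ℝ)
    [FiniteDimensional ℚ K] [IsGalois ℚ K] (h6 : Module.finrank ℚ K = 6)
    (σ : K ≃ₐ[ℚ] K) (hσ : orderOf σ = 6)
    (α : K) (hint : IsIntegral ℤ α) (hintinv : IsIntegral ℤ α⁻¹)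
    (hd1 : |(α : ℝ)| > |(((σ ^ 5) α : K) : ℝ)|)
    (hd2 : |(((σ ^ 5) α : K) : ℝ)| > |((σ α : K) : ℝ)|)
    (hd3 : |((σ α : K) : ℝ)| > 1)
    (hd4 : (1 : ℝ) > |(((σ ^ 4) α : K) : ℝ)|)
    (hd5 : |(((σ ^ 4) α : K) : ℝ)| > |(((σ ^ 2) α : K) : ℝ)|)
    (hd6 : |(((σ ^ 2) α : K) : ℝ)| > |(((σ ^ 3) α : K) : ℝ)|) :
    (mahlerM ((α : ℝ) : ℂ) = |((α * (σ ^ 5) α * σ α : K) : ℝ)|) ∧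
    (IsIntegral ℤ (α * (σ ^ 5) α * σ α) ∧ IsIntegral ℤ (α * (σ ^ 5) α * σ α)⁻¹) ∧
    (|((α * (σ ^ 5) α * σ α : K) : ℝ)| >
        |(((σ ^ 5) (α * (σ ^ 5) α * σ α) : K) : ℝ)| ∧
      |(((σ ^ 5) (α * (σ ^ 5) α * σ α) : K) : ℝ)| >
        |((σ (α * (σ ^ 5) α * σ α) : K) : ℝ)| ∧
      |((σ (α * (σ ^ 5) α * σ α) : K) : ℝ)| > 1 ∧
      (1 : ℝ) > |(((σ ^ 4) (α * (σ ^ 5) α * σ α) : K) : ℝ)| ∧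
      |(((σ ^ 4) (α * (σ ^ 5) α * σ α) : K) : ℝ)| >
        |(((σ ^ 2) (α * (σ ^ 5) α * σ α) : K) : ℝ)| ∧
      |(((σ ^ 2) (α * (σ ^ 5) α * σ α) : K) : ℝ)| >
        |(((σ ^ 3) (α * (σ ^ 5) α * σ α) : K) : ℝ)|) ∧
    (Set.range fun m : ℕ => mahlerC^[m] ((α : ℝ) : ℂ)).Infinite := by
  have hα : IsSexticChainUnit σ α := ⟨hint, hintinv, hd1, hd2, hd3, hd4, hd5, hd6⟩
  have hβ := hα.mul_conj h6 hσ
  exact ⟨hα.mahlerM_eq h6, ⟨hβ.isIntegral, hβ.isIntegral_inv⟩, hβ.chain,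
    hα.infinite_range_iterate_mahlerC h6 hσ⟩

theorem cyclic_sextic_totally_real_wandering (K : IntermediateField ℚ ℝ)
    [FiniteDimensional ℚ K] [IsGalois ℚ K] (h6 : Module.finrank ℚ K = 6)
    (σ : K ≃ₐ[ℚ] K) (hσ : orderOf σ = 6)
    (α : K) (hα0 : α ≠ 0) (hint : IsIntegral ℤ α) (hintinv : IsIntegral ℤ α⁻¹)
    (hd1 : |(α : ℝ)| > |(((σ ^ 5) α : K) : ℝ)|)
    (hd2 : |(((σ ^ 5) α : K) : ℝ)| > |((σ α : K) : ℝ)|)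
    (hd3 : |((σ α : K) : ℝ)| > 1)
    (hd4 : (1 : ℝ) > |(((σ ^ 4) α : K) : ℝ)|)
    (hd5 : |(((σ ^ 4) α : K) : ℝ)| > |(((σ ^ 2) α : K) : ℝ)|)
    (hd6 : |(((σ ^ 2) α : K) : ℝ)| > |(((σ ^ 3) α : K) : ℝ)|) :
    (mahlerM ((α : ℝ) : ℂ) = |((α * (σ ^ 5) α * σ α : K) : ℝ)|) ∧
    (IsIntegral ℤ (α * (σ ^ 5) α * σ α) ∧ IsIntegral ℤ (α * (σ ^ 5) α * σ α)⁻¹) ∧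
    (|((α * (σ ^ 5) α * σ α : K) : ℝ)| >
        |(((σ ^ 5) (α * (σ ^ 5) α * σ α) : K) : ℝ)| ∧
      |(((σ ^ 5) (α * (σ ^ 5) α * σ α) : K) : ℝ)| >
        |((σ (α * (σ ^ 5) α * σ α) : K) : ℝ)| ∧
      |((σ (α * (σ ^ 5) α * σ α) : K) : ℝ)| > 1 ∧
      (1 : ℝ) > |(((σ ^ 4) (α * (σ ^ 5) α * σ α) : K) : ℝ)| ∧
      |(((σ ^ 4) (α * (σ ^ 5) α * σ α) : K) : ℝ)| >
        |(((σ ^ 2) (α * (σ ^ 5) α * σ α) : K) : ℝ)| ∧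
      |(((σ ^ 2) (α * (σ ^ 5) α * σ α) : K) : ℝ)| >
        |(((σ ^ 3) (α * (σ ^ 5) α * σ α) : K) : ℝ)|) ∧
    (Set.range fun m : ℕ => mahlerC^[m] ((α : ℝ) : ℂ)).Infinite :=
  cyclic_sextic_totally_real_wandering_general K h6 σ hσ α hint hintinv hd1 hd2 hd3 hd4 hd5 hd6
end
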